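/- Suppose m ≡ 46 (mod 48). Then j‴ ∈ J, P(j‴) ≠ 0, and for every j ∈ J with j ≠ j‴, either P(j) = 0 or V(j) < V(j‴); in particular, V attains its maximum on J uniquely at j‴. -/

import Mathlib

open Finset

/-- `s a` is the sum of the binary digits of `a`. -/
def sdig (a : ℕ) : ℕ := (Nat.digits 2 a).sum

/-- `carries a b` is the number of carries when adding `a` and `b` in base 2:
`c(a,b) = s(a) + s(b) - s(a+b)`. -/
def carries (a b : ℕ) : ℕ := sdig a + sdig b - sdig (a + b)

/-- The generalized binomial coefficient `C_r(x) = x(x-1)⋯(x-r+1)/r!` (with `C_0(x) = 1`). -/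
def genBinom (x : ℚ) (r : ℕ) : ℚ :=
  (∏ p ∈ Finset.range r, (x - p)) / (Nat.factorial r : ℚ)

/-- Membership in the index set `J`: here `j i` (for `i : Fin n`) is the paper's
`j_{i+1}`, so the defining relation `(2^n-1)j_1 + ⋯ + (2-1)j_n = m+1` becomes
`∑ k, (2^(n-k) - 1) * j k = m + 1`. -/
def inJ (n m : ℕ) (j : Fin n → ℕ) : Prop :=
  ∑ k : Fin n, (2 ^ (n - (k : ℕ)) - 1) * j k = m + 1

/-- `α_j(k)`: for `K : Fin n`, `alphaF n m j K` is the paper's `α_j(K+1)`, i.e.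
`m / 2^(n-K) - ∑_{I < K} 2^(K-I) j_{I+1}`. -/
def alphaF (n m : ℕ) (j : Fin n → ℕ) (K : Fin n) : ℚ :=
  (m : ℚ) / 2 ^ (n - (K : ℕ)) -
    ∑ I : Fin n, if (I : ℕ) < (K : ℕ) then 2 ^ ((K : ℕ) - (I : ℕ)) * (j I : ℚ) else 0

/-- `P(j) = ∏_{k=1}^n C_{j_k}(α_j(k))`. -/
def Pprod (n m : ℕ) (j : Fin n → ℕ) : ℚ :=
  ∏ k : Fin n, genBinom (alphaF n m j k) (j k)

/-- `V(j) = -ν(P(j))`, where `ν` is the 2-adic valuation on `ℚ`. -/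
def V (n m : ℕ) (j : Fin n → ℕ) : ℤ := - padicValRat 2 (Pprod n m j)

/-!
Write `n = N + 1` and `m = 2M` with `M = 24t + 23` odd, and split `j` into its first `N`
coordinates `u` (indexed from `0`) and its last one `r`. For `i < N` the argument of the `i`-th
factor of `P(j)` has 2-adic valuation `i - N < 0`, so that factor is nonzero, of valuation
`s(uᵢ) - (N + 1 - i) uᵢ` by Legendre's formula. The last argument is the integer `M - S` with
`S = ∑ 2^(N-i) uᵢ`: if `S ≤ M`, the relation defining `J` forces `r > M - S` and `P(j) = 0`; if
`S = M + y + 1`, the last factor is `±C(y + r, r)`. Hence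
`V(j) = ∑ ((N + 1 - i) uᵢ - s(uᵢ)) - ν C(y + r, r)`.

By subadditivity of the binary digit sum, `s(S) ≤ ∑ s(uᵢ)` and
`s(t) + 4 = s(32t + 30) ≤ s(S) + s(w)`, where `S + w = 32t + 30`: the relation defining `J`
together with `2 ∑ uᵢ ≤ S` gives `w ≥ 0`, and `w` is even as `S` is. With the defect
`D = S - ∑ (N + 1 - i) uᵢ ≥ 0` this gives
`V(j) ≤ 32t + 26 - s(t) - (w - s(w)) - D - ν C(y + r, r)`, while `V(j‴) = 32t + 25 - s(t)`.
The three correction terms add up to less than `2` only if `w = 0` and `D ≤ 1`, leaving `j‴`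
and `j′`, or `w = 2` and `D = 0`, leaving `j″`; and `C(8t + 8, 2)` and `C(8t + 9, 5)`, the
binomial coefficients of `j′` and `j″`, are divisible by `4` and `2`.
-/

lemma sdig_two_pow_mul (k a : ℕ) : sdig (2 ^ k * a) = sdig a := by
  rcases Nat.eq_zero_or_pos a with rfl | ha
  · simp
  · simp [sdig, Nat.digits_base_pow_mul one_lt_two ha]

lemma sdig_add_two_pow_mul {r k : ℕ} (hr : r < 2 ^ k) (t : ℕ) :
    sdig (r + 2 ^ k * t) = sdig r + sdig t := by
  rcases Nat.eq_zero_or_pos t with rfl | ht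
  · simp [sdig]
  · have hlen := (Nat.digits_length_le_iff one_lt_two r).2 hr
    have := Nat.digits_append_zeroes_append_digits (k := k - (Nat.digits 2 r).length)
      (n := r) one_lt_two ht
    rw [Nat.add_sub_cancel' hlen] at this
    simp [sdig, ← this]

lemma padicValNat_two_factorial (r : ℕ) : padicValNat 2 r.factorial = r - sdig r := by
  simpa [sdig] using sub_one_mul_padicValNat_factorial (p := 2) r

lemma padicValNat_two_choose (a b : ℕ) :
    padicValNat 2 ((a + b).choose b) = sdig b + sdig a - sdig (a + b) := by
  simpa [sdig] using sub_one_mul_padicValNat_choose_eq_sub_sum_digits' (p := 2) (k := b) (n := a)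

lemma sdig_le (a : ℕ) : sdig a ≤ a := Nat.digit_sum_le 2 a

lemma sdig_add_le (a b : ℕ) : sdig (a + b) ≤ sdig a + sdig b := by
  have h := (padicValNat_dvd_iff_le (p := 2) (Nat.factorial_ne_zero (a + b))).1
    (pow_padicValNat_dvd.trans (Nat.factorial_mul_factorial_dvd_factorial_add a b))
  rw [padicValNat.mul (Nat.factorial_ne_zero a) (Nat.factorial_ne_zero b),
    padicValNat_two_factorial, padicValNat_two_factorial, padicValNat_two_factorial] at h
  have := sdig_le a
  have := sdig_le b
  have := sdig_le (a + b)
  omega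

lemma sdig_sum_le {ι : Type*} (s : Finset ι) (f : ι → ℕ) :
    sdig (∑ i ∈ s, f i) ≤ ∑ i ∈ s, sdig (f i) := by
  induction s using Finset.cons_induction with
  | empty => simp [sdig]
  | cons i s hi ih =>
    rw [sum_cons, sum_cons]
    exact (sdig_add_le _ _).trans (by omega)

lemma sdig_add_two_le {w : ℕ} (hw : 4 ≤ w) : sdig w + 2 ≤ w := by
  have h := sdig_add_two_pow_mul (k := 1) (Nat.mod_lt w two_pos) (w / 2)
  rw [pow_one, Nat.mod_add_div] at h
  have := sdig_le (w % 2)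
  have := sdig_le (w / 2)
  omega

lemma sdig_succ_le (t : ℕ) : sdig (t + 1) ≤ sdig t + 1 :=
  (sdig_add_le t 1).trans_eq (by simp [sdig])

lemma one_le_padicValNat_choose_five (t : ℕ) : 1 ≤ padicValNat 2 ((8 * t + 4 + 5).choose 5) := by
  rw [padicValNat_two_choose, show 8 * t + 4 = 4 + 2 ^ 3 * t by ring,
    show 4 + 2 ^ 3 * t + 5 = 1 + 2 ^ 3 * (t + 1) by ring, sdig_add_two_pow_mul (by norm_num),
    sdig_add_two_pow_mul (by norm_num), show sdig 1 = 1 by decide, show sdig 4 = 1 by decide,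
    show sdig 5 = 2 by decide]
  have := sdig_succ_le t
  omega

lemma two_le_padicValNat_choose_two (t : ℕ) : 2 ≤ padicValNat 2 ((8 * t + 6 + 2).choose 2) := by
  rw [padicValNat_two_choose, show 8 * t + 6 = 6 + 2 ^ 3 * t by ring,
    show 6 + 2 ^ 3 * t + 2 = 2 ^ 3 * (t + 1) by ring, sdig_add_two_pow_mul (by norm_num),
    sdig_two_pow_mul, show sdig 2 = 1 by decide, show sdig 6 = 2 by decide]
  have := sdig_succ_le t
  omega

lemma genBinom_neg_natCast_add_one (y r : ℕ) :
    genBinom (-(y + 1)) r = (-1) ^ r * (y + r).choose r := by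
  have h : ∏ p ∈ range r, (-(y + 1 : ℚ) - p) = (-1) ^ r * ((y + 1).ascFactorial r : ℕ) :=
    calc ∏ p ∈ range r, (-(y + 1 : ℚ) - p) = ∏ p ∈ range r, (-1) * ((y + 1 + p : ℕ) : ℚ) :=
          prod_congr rfl fun _ _ => by push_cast; ring
      _ = _ := by rw [prod_mul_distrib, prod_const, card_range, Nat.ascFactorial_eq_prod_range,
          Nat.cast_prod]
  rw [genBinom, h, Nat.ascFactorial_eq_factorial_mul_choose]
  push_cast
  field_simp

lemma genBinom_natCast_of_lt {x r : ℕ} (h : x < r) : genBinom x r = 0 := by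
  rw [genBinom, prod_eq_zero (mem_range.2 h) (sub_self _), zero_div]

section Valuation

variable {p : ℕ} [Fact p.Prime]

lemma padicValRat_prod {ι : Type*} (s : Finset ι) {f : ι → ℚ} (hf : ∀ i ∈ s, f i ≠ 0) :
    padicValRat p (∏ i ∈ s, f i) = ∑ i ∈ s, padicValRat p (f i) := by
  induction s using Finset.cons_induction with
  | empty => simp
  | cons i s hi ih =>
    rw [prod_cons, sum_cons, padicValRat.mul (hf i (mem_cons_self i s))
      (prod_ne_zero_iff.2 fun k hk => hf k (mem_cons_of_mem hk)),
      ih fun k hk => hf k (mem_cons_of_mem hk)]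

lemma padicValRat_sub_intCast {x : ℚ} (hx : padicValRat p x < 0) (z : ℤ) :
    x - z ≠ 0 ∧ padicValRat p (x - z) = padicValRat p x := by
  have hz : 0 ≤ padicValRat p (-(z : ℚ)) := by
    rw [padicValRat.neg, padicValRat.of_int]
    exact Int.natCast_nonneg _
  have hxz : x - z ≠ 0 := fun h => by
    rw [sub_eq_zero.1 h, padicValRat.of_int] at hx
    omega
  refine ⟨hxz, ?_⟩
  rcases eq_or_ne z 0 with rfl | hz0
  · simp
  · have hx0 : x ≠ 0 := by rintro rfl; simp at hx
    rw [sub_eq_add_neg]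
    exact padicValRat.add_eq_of_lt (by rwa [← sub_eq_add_neg]) hx0 (by simpa using hz0)
      (hx.trans_le hz)

lemma genBinom_ne_zero_of_padicValRat_neg {x : ℚ} (hx : padicValRat p x < 0) (r : ℕ) :
    genBinom x r ≠ 0 :=
  div_ne_zero (prod_ne_zero_iff.2 fun k _ => by exact_mod_cast (padicValRat_sub_intCast hx k).1)
    (by exact_mod_cast r.factorial_ne_zero)

lemma padicValRat_genBinom_of_neg {x : ℚ} (hx : padicValRat p x < 0) (r : ℕ) :
    padicValRat p (genBinom x r) = r * padicValRat p x - padicValNat p r.factorial := by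
  have hfac : ∀ k ∈ range r, x - k ≠ 0 ∧ padicValRat p (x - k) = padicValRat p x :=
    fun k _ => by exact_mod_cast padicValRat_sub_intCast hx k
  rw [genBinom, padicValRat.div (prod_ne_zero_iff.2 fun k hk => (hfac k hk).1)
    (by exact_mod_cast r.factorial_ne_zero), padicValRat_prod _ fun k hk => (hfac k hk).1,
    sum_congr rfl fun k hk => (hfac k hk).2, padicValRat.of_nat]
  simp

end Valuation

section Factorization

variable {N : ℕ}

def weightSum (u : Fin N → ℕ) : ℕ := ∑ i : Fin N, 2 ^ (N - (i : ℕ)) * u i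

def defect (u : Fin N → ℕ) : ℕ := ∑ i : Fin N, (2 ^ (N - (i : ℕ)) - (N + 1 - (i : ℕ))) * u i

def initV (u : Fin N → ℕ) : ℤ := ∑ i : Fin N, (((N + 1 - i : ℕ) : ℤ) * u i - sdig (u i))

lemma exists_alphaF_eq_sub (n m : ℕ) (j : Fin n → ℕ) (K : Fin n) :
    ∃ z : ℕ, alphaF n m j K = m / 2 ^ (n - K) - z :=
  ⟨∑ I : Fin n, if (I : ℕ) < (K : ℕ) then 2 ^ ((K : ℕ) - (I : ℕ)) * j I else 0, by
    simp only [alphaF]; push_cast; rfl⟩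

lemma alphaF_last (m : ℕ) (j : Fin (N + 1) → ℕ) :
    alphaF (N + 1) m j (Fin.last N) = m / 2 - weightSum (Fin.init j) := by
  simp [alphaF, weightSum, Fin.sum_univ_castSucc, Fin.init]

lemma Pprod_succ (m : ℕ) (j : Fin (N + 1) → ℕ) :
    Pprod (N + 1) m j = (∏ i : Fin N, genBinom (alphaF (N + 1) m j i.castSucc) (j i.castSucc)) *
      genBinom (m / 2 - weightSum (Fin.init j)) (j (Fin.last N)) := by
  rw [Pprod, Fin.prod_univ_castSucc, alphaF_last]

lemma inJ_succ_iff (m : ℕ) (j : Fin (N + 1) → ℕ) :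
    inJ (N + 1) m j ↔ 2 * weightSum (Fin.init j) + j (Fin.last N) = m + 1 + ∑ i, Fin.init j i := by
  have h : ∑ i : Fin N, (2 ^ (N + 1 - i) - 1) * j i.castSucc + ∑ i, Fin.init j i =
      2 * weightSum (Fin.init j) := by
    rw [weightSum, ← sum_add_distrib, mul_sum]
    refine sum_congr rfl fun i _ => ?_
    have h2 : 2 ^ (N + 1 - i) = 2 * 2 ^ (N - i) := by rw [← pow_succ']; congr 1; omega
    rw [h2, Nat.sub_mul, one_mul, Fin.init,
      Nat.sub_add_cancel (Nat.le_mul_of_pos_left _ (by positivity)), mul_assoc]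
  rw [inJ, Fin.sum_univ_castSucc]
  simp only [Fin.val_castSucc, Fin.val_last, Nat.add_sub_cancel_left, pow_one]
  omega

lemma padicValRat_alphaF_castSucc {M : ℕ} (hM : Odd M) (j : Fin (N + 1) → ℕ) (i : Fin N) :
    padicValRat 2 (alphaF (N + 1) (2 * M) j i.castSucc) = i - N := by
  obtain ⟨z, hz⟩ := exists_alphaF_eq_sub (N + 1) (2 * M) j i.castSucc
  have hM0 : M ≠ 0 := by rintro rfl; simp at hM
  have h2 : padicValRat 2 (2 : ℚ) = 1 := by simpa using padicValRat.self (p := 2) one_lt_two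
  have h : padicValRat 2 (((2 * M : ℕ) : ℚ) / 2 ^ (N + 1 - i)) = i - N := by
    rw [padicValRat.div (by exact_mod_cast (by omega : 2 * M ≠ 0)) (by positivity),
      padicValRat.of_nat, padicValRat.pow _, padicValNat.mul two_ne_zero hM0,
      padicValNat.eq_zero_of_not_dvd (Nat.two_dvd_ne_zero.2 (Nat.odd_iff.1 hM))]
    simp [Nat.cast_sub (by omega : (i : ℕ) ≤ N + 1), h2]
    ring
  rw [hz, Fin.val_castSucc, show ((z : ℚ)) = ((z : ℤ) : ℚ) by simp,
    (padicValRat_sub_intCast (p := 2) (by rw [h]; omega) z).2, h]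

lemma genBinom_alphaF_castSucc {M : ℕ} (hM : Odd M) (j : Fin (N + 1) → ℕ) (i : Fin N) :
    genBinom (alphaF (N + 1) (2 * M) j i.castSucc) (j i.castSucc) ≠ 0 ∧
      padicValRat 2 (genBinom (alphaF (N + 1) (2 * M) j i.castSucc) (j i.castSucc)) =
        sdig (j i.castSucc) - ((N + 1 - i : ℕ) : ℤ) * j i.castSucc := by
  have hneg : padicValRat 2 (alphaF (N + 1) (2 * M) j i.castSucc) < 0 := by
    rw [padicValRat_alphaF_castSucc hM]; omega
  refine ⟨genBinom_ne_zero_of_padicValRat_neg hneg _, ?_⟩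
  rw [padicValRat_genBinom_of_neg hneg, padicValRat_alphaF_castSucc hM,
    padicValNat_two_factorial, Nat.cast_sub (sdig_le _), Nat.cast_sub (by omega : (i : ℕ) ≤ N + 1)]
  push_cast
  ring

lemma Pprod_eq_zero_of_weightSum_le {M : ℕ} {j : Fin (N + 1) → ℕ} (hJ : inJ (N + 1) (2 * M) j)
    (h : weightSum (Fin.init j) ≤ M) : Pprod (N + 1) (2 * M) j = 0 := by
  rw [inJ_succ_iff] at hJ
  have hlast :
      ((2 * M : ℕ) : ℚ) / 2 - weightSum (Fin.init j) = (M - weightSum (Fin.init j) : ℕ) := by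
    push_cast [h]; ring
  rw [Pprod_succ, hlast, genBinom_natCast_of_lt (by omega), mul_zero]

lemma V_eq_of_weightSum_eq {M y : ℕ} (hM : Odd M) {j : Fin (N + 1) → ℕ}
    (hy : weightSum (Fin.init j) = M + y + 1) :
    Pprod (N + 1) (2 * M) j ≠ 0 ∧
      V (N + 1) (2 * M) j =
        initV (Fin.init j) - padicValNat 2 ((y + j (Fin.last N)).choose (j (Fin.last N))) := by
  have hlast : ((2 * M : ℕ) : ℚ) / 2 - weightSum (Fin.init j) = -(y + 1) := by
    rw [hy]; push_cast; ring
  have hchoose : (((y + j (Fin.last N)).choose (j (Fin.last N)) : ℕ) : ℚ) ≠ 0 := by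
    exact_mod_cast (Nat.choose_pos le_add_self).ne'
  have hsign : ((-1 : ℚ) ^ j (Fin.last N)) ≠ 0 := pow_ne_zero _ (by norm_num)
  have hinit := genBinom_alphaF_castSucc hM j
  have hprod : ∏ i : Fin N, genBinom (alphaF (N + 1) (2 * M) j i.castSucc) (j i.castSucc) ≠ 0 :=
    prod_ne_zero_iff.2 fun i _ => (hinit i).1
  rw [V, Pprod_succ, hlast, genBinom_neg_natCast_add_one]
  refine ⟨mul_ne_zero hprod (mul_ne_zero hsign hchoose), ?_⟩
  rw [padicValRat.mul hprod (mul_ne_zero hsign hchoose), padicValRat.mul hsign hchoose,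
    padicValRat_prod _ fun i _ => (hinit i).1, sum_congr rfl fun i _ => (hinit i).2,
    padicValRat.pow _, padicValRat.neg, padicValRat.one, padicValRat.of_nat]
  simp [initV, Fin.init]
  ring

end Factorization

lemma sum_eq_add_of_eq_zero {A : Type*} [AddCommMonoid A] {N : ℕ} (hN : 2 ≤ N) (f : Fin N → A)
    (hf : ∀ i : Fin N, (i : ℕ) + 2 < N → f i = 0) :
    ∑ i, f i = f ⟨N - 2, by omega⟩ + f ⟨N - 1, by omega⟩ :=
  sum_eq_add_of_mem _ _ (mem_univ _) (mem_univ _) (by simp [Fin.ext_iff]; omega)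
    fun i _ hi => hf i (by simp [Fin.ext_iff] at hi; omega)

section Defect

variable {N : ℕ} (u : Fin N → ℕ)

lemma two_dvd_weightSum : 2 ∣ weightSum u :=
  dvd_sum fun i _ => (dvd_pow_self 2 (by omega : N - (i : ℕ) ≠ 0)).mul_right _

lemma two_mul_sum_le_weightSum : 2 * ∑ i, u i ≤ weightSum u := by
  rw [mul_sum]
  exact sum_le_sum fun i _ => Nat.mul_le_mul_right _ (Nat.le_self_pow (by omega) 2)

lemma sdig_weightSum_le : sdig (weightSum u) ≤ ∑ i, sdig (u i) :=
  (sdig_sum_le _ _).trans_eq (sum_congr rfl fun _ _ => sdig_two_pow_mul _ _)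

lemma sum_add_defect : ∑ i : Fin N, (N + 1 - (i : ℕ)) * u i + defect u = weightSum u := by
  rw [defect, weightSum, ← sum_add_distrib]
  refine sum_congr rfl fun i _ => ?_
  have : N - (i : ℕ) < 2 ^ (N - (i : ℕ)) := Nat.lt_two_pow_self
  rw [← add_mul, Nat.add_sub_cancel' (by omega)]

lemma two_pow_mul_sub_add_one_le_two_pow {k e : ℕ} (h : k ≤ e) : 2 ^ k * (e - k + 1) ≤ 2 ^ e := by
  rw [← Nat.add_sub_cancel' h, pow_add, Nat.add_sub_cancel_left]
  exact Nat.mul_le_mul_left _ Nat.lt_two_pow_self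

lemma coeff_mul_le_defect (i : Fin N) :
    (2 ^ (N - (i : ℕ)) - (N + 1 - (i : ℕ))) * u i ≤ defect u :=
  single_le_sum (f := fun i : Fin N => (2 ^ (N - (i : ℕ)) - (N + 1 - (i : ℕ))) * u i)
    (fun _ _ => Nat.zero_le _) (mem_univ i)

lemma le_defect {i : Fin N} (hi : (i : ℕ) + 2 ≤ N) : u i ≤ defect u := by
  have := two_pow_mul_sub_add_one_le_two_pow (by omega : 2 ≤ N - (i : ℕ))
  exact (Nat.le_mul_of_pos_left _ (by omega)).trans (coeff_mul_le_defect u i)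

lemma four_mul_le_defect {i : Fin N} (hi : (i : ℕ) + 3 ≤ N) : 4 * u i ≤ defect u := by
  have := two_pow_mul_sub_add_one_le_two_pow (by omega : 3 ≤ N - (i : ℕ))
  exact (Nat.mul_le_mul_right _ (by omega)).trans (coeff_mul_le_defect u i)

lemma eq_zero_of_defect_le_one (hD : defect u ≤ 1) {i : Fin N} (hi : (i : ℕ) + 2 < N) :
    u i = 0 := by
  have := four_mul_le_defect u (i := i) (by omega)
  omega

lemma weightSum_eq_of_defect_le_one (hN : 2 ≤ N) (hD : defect u ≤ 1) :
    weightSum u = 4 * u ⟨N - 2, by omega⟩ + 2 * u ⟨N - 1, by omega⟩ := by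
  rw [weightSum, sum_eq_add_of_eq_zero hN _ fun i hi => by
    rw [eq_zero_of_defect_le_one u hD hi, mul_zero]]
  simp only [show N - (N - 2) = 2 by omega, show N - (N - 1) = 1 by omega]
  ring

lemma sum_eq_of_defect_le_one (hN : 2 ≤ N) (hD : defect u ≤ 1) :
    ∑ i, u i = u ⟨N - 2, by omega⟩ + u ⟨N - 1, by omega⟩ :=
  sum_eq_add_of_eq_zero hN u fun _ hi => eq_zero_of_defect_le_one u hD hi

end Defect

section TripleMaximum

variable {N t : ℕ}

/-- For `n = N + 1` and `m = 48t + 46`, `j‴ = Fin.snoc (tripleInit N t) 1`. -/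
def tripleInit (N t : ℕ) : Fin N → ℕ := fun i =>
  if (i : ℕ) = N - 2 then 1 else if (i : ℕ) = N - 1 then 16 * t + 13 else 0

lemma tripleInit_eq_zero {i : Fin N} (hi : (i : ℕ) + 2 < N) : tripleInit N t i = 0 := by
  simp only [tripleInit]
  rw [if_neg (by omega), if_neg (by omega)]

lemma sum_tripleInit {A : Type*} [AddCommMonoid A] (hN : 2 ≤ N) (f : Fin N → ℕ → A)
    (hf : ∀ i, f i 0 = 0) :
    ∑ i, f i (tripleInit N t i) = f ⟨N - 2, by omega⟩ 1 + f ⟨N - 1, by omega⟩ (16 * t + 13) := by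
  rw [sum_eq_add_of_eq_zero hN _ fun i hi => by rw [tripleInit_eq_zero hi, hf]]
  simp [tripleInit, show N - 1 ≠ N - 2 by omega]

lemma eq_tripleInit_of_defect_le_one (hN : 2 ≤ N) {u : Fin N → ℕ} (hD : defect u ≤ 1)
    (ha : u ⟨N - 2, by omega⟩ = 1) (hb : u ⟨N - 1, by omega⟩ = 16 * t + 13) :
    u = tripleInit N t := by
  funext i
  rcases (by omega : (i : ℕ) + 2 < N ∨ (i : ℕ) = N - 2 ∨ (i : ℕ) = N - 1) with hi | hi | hi
  · rw [eq_zero_of_defect_le_one u hD hi, tripleInit_eq_zero hi]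
  · rw [show i = ⟨N - 2, by omega⟩ from Fin.ext hi, ha]
    simp [tripleInit]
  · rw [show i = ⟨N - 1, by omega⟩ from Fin.ext hi, hb]
    simp [tripleInit, show N - 1 ≠ N - 2 by omega]

lemma initV_le {w : ℕ} (u : Fin N → ℕ) (hw : weightSum u + w = 32 * t + 30) :
    initV u ≤ 32 * t + 26 - sdig t - ((w : ℤ) - sdig w) - defect u := by
  have hsum := sum_add_defect u
  have hsdig := sdig_weightSum_le u
  have hsplit : sdig t + 4 ≤ sdig (weightSum u) + sdig w :=
    calc sdig t + 4 = sdig (weightSum u + w) := by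
          rw [hw, show 32 * t + 30 = 30 + 2 ^ 5 * t by ring, sdig_add_two_pow_mul (by norm_num),
            show sdig 30 = 4 by decide, add_comm]
      _ ≤ _ := sdig_add_le _ _
  have hV : initV u =
      ((∑ i : Fin N, (N + 1 - (i : ℕ)) * u i : ℕ) : ℤ) - ((∑ i, sdig (u i) : ℕ) : ℤ) := by
    rw [initV, sum_sub_distrib]
    push_cast
    rfl
  omega

lemma initV_sub_padicValNat_lt_or_eq (hN : 2 ≤ N) {y r : ℕ} {u : Fin N → ℕ}
    (hS : weightSum u = 24 * t + 23 + y + 1)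
    (hJ : 2 * weightSum u + r = 2 * (24 * t + 23) + 1 + ∑ i, u i) :
    initV u - padicValNat 2 ((y + r).choose r) < 32 * t + 25 - sdig t ∨
      (u = tripleInit N t ∧ r = 1) := by
  have heven := two_dvd_weightSum u
  have hsum := two_mul_sum_le_weightSum u
  obtain ⟨w, hw⟩ : ∃ w, weightSum u + w = 32 * t + 30 := ⟨32 * t + 30 - weightSum u, by omega⟩
  have hbound := initV_le u hw
  have hsdig := sdig_le w
  by_cases hlarge : 2 ≤ (w - sdig w) + defect u + padicValNat 2 ((y + r).choose r)
  · left
    omega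
  have hw02 : w = 0 ∨ w = 2 := by
    have : 4 ≤ w → sdig w + 2 ≤ w := sdig_add_two_le
    omega
  have hD : defect u ≤ 1 := by omega
  have hS' := weightSum_eq_of_defect_le_one u hN hD
  have hA' := sum_eq_of_defect_le_one u hN hD
  have ha := le_defect u (i := ⟨N - 2, by omega⟩) (by simp only; omega)
  rcases hw02 with rfl | rfl
  · rcases Nat.le_one_iff_eq_zero_or_eq_one.1 (ha.trans hD) with ha0 | ha1
    · have := two_le_padicValNat_choose_two t
      obtain ⟨rfl, rfl⟩ : y = 8 * t + 6 ∧ r = 2 := by omega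
      omega
    · exact Or.inr ⟨eq_tripleInit_of_defect_le_one hN hD ha1 (by omega), by omega⟩
  · have := one_le_padicValNat_choose_five t
    rw [show sdig 2 = 1 by decide] at hlarge
    obtain ⟨rfl, rfl⟩ : y = 8 * t + 4 ∧ r = 5 := by omega
    omega

lemma weightSum_tripleInit (hN : 2 ≤ N) : weightSum (tripleInit N t) = 32 * t + 30 := by
  rw [weightSum, sum_tripleInit hN (fun i x => 2 ^ (N - (i : ℕ)) * x) fun _ => mul_zero _]
  simp only [show N - (N - 2) = 2 by omega, show N - (N - 1) = 1 by omega]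
  ring

lemma inJ_snoc_tripleInit (hN : 2 ≤ N) :
    inJ (N + 1) (2 * (24 * t + 23)) (Fin.snoc (tripleInit N t) 1) := by
  rw [inJ_succ_iff, Fin.init_snoc, Fin.snoc_last, weightSum_tripleInit hN,
    sum_tripleInit hN (fun _ x => x) fun _ => rfl]
  ring

lemma V_snoc_tripleInit (hN : 2 ≤ N) :
    Pprod (N + 1) (2 * (24 * t + 23)) (Fin.snoc (tripleInit N t) 1) ≠ 0 ∧
      V (N + 1) (2 * (24 * t + 23)) (Fin.snoc (tripleInit N t) 1) = 32 * t + 25 - sdig t := by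
  obtain ⟨hP, hV⟩ := V_eq_of_weightSum_eq (M := 24 * t + 23) (y := 8 * t + 6)
    (j := Fin.snoc (tripleInit N t) 1) ⟨12 * t + 11, by ring⟩
    (by rw [Fin.init_snoc, weightSum_tripleInit hN]; ring)
  refine ⟨hP, ?_⟩
  rw [hV, Fin.init_snoc, Fin.snoc_last, Nat.choose_one_right,
    padicValNat.eq_zero_of_not_dvd (by omega), initV,
    sum_tripleInit hN (fun i x => ((N + 1 - i : ℕ) : ℤ) * x - sdig x) fun _ => by simp [sdig],
    show 16 * t + 13 = 13 + 2 ^ 4 * t by ring, sdig_add_two_pow_mul (by norm_num),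
    show sdig 1 = 1 by decide, show sdig 13 = 3 by decide]
  simp only [show N + 1 - (N - 2) = 3 by omega, show N + 1 - (N - 1) = 2 by omega]
  push_cast
  ring

end TripleMaximum

theorem stmt14_general (n m : ℕ) (hn : 3 ≤ n)
    (h48 : m % 48 = 46)
    (j3 : Fin n → ℕ)
    (hj3 : j3 = fun k : Fin n =>
      if (k : ℕ) = n - 3 then 1
      else if (k : ℕ) = n - 2 then (m - 7) / 3
      else if (k : ℕ) = n - 1 then 1 else 0) :
    inJ n m j3 ∧ Pprod n m j3 ≠ 0 ∧
      ∀ j : Fin n → ℕ, inJ n m j → j ≠ j3 →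
        Pprod n m j = 0 ∨ V n m j < V n m j3 := by
  obtain ⟨t, rfl⟩ : ∃ t, m = 2 * (24 * t + 23) := ⟨m / 48, by omega⟩
  obtain ⟨N, rfl⟩ : ∃ N, n = N + 1 := ⟨n - 1, by omega⟩
  have hN : 2 ≤ N := by omega
  have hj3' : j3 = Fin.snoc (tripleInit N t) 1 := by
    subst hj3
    funext k
    refine Fin.lastCases ?_ (fun i => ?_) k
    · simp only [Fin.snoc_last, Fin.val_last]
      split_ifs <;> omega
    · simp only [Fin.snoc_castSucc, Fin.val_castSucc, tripleInit]
      split_ifs <;> omega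
  subst hj3'
  obtain ⟨hP3, hV3⟩ := V_snoc_tripleInit (t := t) hN
  refine ⟨inJ_snoc_tripleInit hN, hP3, fun j hJ hne => ?_⟩
  rcases le_or_gt (weightSum (Fin.init j)) (24 * t + 23) with hle | hgt
  · exact Or.inl (Pprod_eq_zero_of_weightSum_le hJ hle)
  obtain ⟨y, hy⟩ : ∃ y, weightSum (Fin.init j) = 24 * t + 23 + y + 1 :=
    ⟨weightSum (Fin.init j) - (24 * t + 24), by omega⟩
  obtain ⟨-, hV⟩ := V_eq_of_weightSum_eq ⟨12 * t + 11, by ring⟩ hy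
  refine Or.inr (hV ▸ hV3 ▸ ?_)
  refine (initV_sub_padicValNat_lt_or_eq hN hy ((inJ_succ_iff _ _).1 hJ)).resolve_right ?_
  rintro ⟨hu, hr⟩
  exact hne (by rw [← Fin.snoc_init_self j, hu, hr])

/-- If `m ≡ 46 mod 48`, then `j‴ ∈ J`, `P(j‴) ≠ 0`, and every `j ∈ J` with
`j ≠ j‴` has `P(j) = 0` or `V(j) < V(j‴)`; in particular, `V` attains its
maximum on `J` uniquely at `j‴`. -/
theorem stmt14 (n m : ℕ) (hn : 3 ≤ n) (hm : 1 ≤ m) (hmn : m ≤ 2 ^ (n + 1) - 3)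
    (h48 : m % 48 = 46)
    (j3 : Fin n → ℕ)
    (hj3 : j3 = fun k : Fin n =>
      if (k : ℕ) = n - 3 then 1
      else if (k : ℕ) = n - 2 then (m - 7) / 3
      else if (k : ℕ) = n - 1 then 1 else 0) :
    inJ n m j3 ∧ Pprod n m j3 ≠ 0 ∧
      ∀ j : Fin n → ℕ, inJ n m j → j ≠ j3 →
        Pprod n m j = 0 ∨ V n m j < V n m j3 :=
  stmt14_general n m hn h48 j3 hj3
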